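/- arXiv:1911.04207 — 2 statements merged into one kernel-verified Lean document; each statement's English description precedes it below -/
import Mathlib

section
/- Let K ≥ 1, let J, H : Fin K → ℝ be families of real numbers with max_k J k > min_k J k and max_k H k > min_k H k, and let α ∈ ℝ with 0 ≤ α < 1. Define the min-max normalizations Ĵ k = (J k − min_m J m)/(max_m J m − min_m J m) and Ĥ k = (H k − min_m H m)/(max_m H m − min_m H m), and the score f k = (1−α)·Ĵ k + α·Ĥ k. Suppose i, j : Fin K satisfy f j ≥ f i (j is the index picked by the weighted picking rule at the new time step), and suppose J_old : ℝ and σ : ℝ satisfy J i − J_old ≥ σ (the picked policy i improved by at least σ from its previous performance J_old). Then J j − J_old ≥ (−α/(1−α))·(max_k J k − min_k J k) + σ. -/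
/-- Theorem 1 of the paper (performance-drop bound for Multi-Path TRPO):
if the weighted picking rule prefers `j` over `i` at the new time step, and
policy `i` improved by at least `σ` over its previous performance `J_old`,
then `J j - J_old ≥ (-α/(1-α)) * (max J - min J) + σ`. -/
theorem mp_trpo_performance_drop_bound
    (K : ℕ) (hK : 1 ≤ K) (J H : Fin K → ℝ) (α : ℝ)
    (hα0 : 0 ≤ α) (hα1 : α < 1)
    (hJrange : (⨅ m, J m) < ⨆ m, J m)
    (hHrange : (⨅ m, H m) < ⨆ m, H m)
    (Jhat Hhat f : Fin K → ℝ)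
    (hJhat : ∀ k, Jhat k = (J k - ⨅ m, J m) / ((⨆ m, J m) - ⨅ m, J m))
    (hHhat : ∀ k, Hhat k = (H k - ⨅ m, H m) / ((⨆ m, H m) - ⨅ m, H m))
    (hf : ∀ k, f k = (1 - α) * Jhat k + α * Hhat k)
    (i j : Fin K) (hpick : f j ≥ f i)
    (J_old σ : ℝ) (himp : J i - J_old ≥ σ) :
    J j - J_old ≥ (-α / (1 - α)) * ((⨆ k, J k) - ⨅ k, J k) + σ := by
  haveI : Nonempty (Fin K) := Fin.pos_iff_nonempty.mp hK
  have h1α : 0 < 1 - α := by linarith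
  have hdJ : 0 < (⨆ m, J m) - ⨅ m, J m := sub_pos.mpr hJrange
  have hdH : 0 < (⨆ m, H m) - ⨅ m, H m := sub_pos.mpr hHrange
  have hHi : (⨅ m, H m) ≤ H i := ciInf_le (Set.Finite.bddBelow (Set.finite_range H)) i
  have hHj : H j ≤ ⨆ m, H m := le_ciSup (Set.Finite.bddAbove (Set.finite_range H)) j
  have hHhati : 0 ≤ Hhat i := by
    rw [hHhat]; exact div_nonneg (by linarith) hdH.le
  have hHhatj : Hhat j ≤ 1 := by
    rw [hHhat, div_le_one hdH]; linarith
  have key : -α ≤ (1 - α) * (J j - J i) / ((⨆ m, J m) - ⨅ m, J m) := by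
    have hp := hpick
    rw [hf, hf, hJhat, hJhat] at hp
    have : (1 - α) * ((J j - J i) / ((⨆ m, J m) - ⨅ m, J m)) ≥ α * (Hhat i - Hhat j) := by
      simp only [sub_div] at hp ⊢
      linarith
    rw [mul_div_assoc]
    nlinarith [mul_nonneg hα0 (by linarith : 0 ≤ 1 - Hhat i + Hhat j - 1 + 1 - (Hhat j - Hhat i) )]
  have key2 : -α * ((⨆ m, J m) - ⨅ m, J m) ≤ (1 - α) * (J j - J i) :=
    (le_div_iff₀ hdJ).mp key
  have hmain : (-α / (1 - α)) * ((⨆ k, J k) - ⨅ k, J k) ≤ J j - J i := by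
    rw [div_mul_eq_mul_div, div_le_iff₀ h1α]
    nlinarith [key2]
  linarith
end

section
/- Let K ≥ 1, let J, H : Fin K → ℝ be families of real numbers with max_k J k > min_k J k and max_k H k > min_k H k, and let α ∈ ℝ with 0 ≤ α < 1. Define the min-max normalizations Ĵ k = (J k − min_m J m)/(max_m J m − min_m J m) and Ĥ k = (H k − min_m H m)/(max_m H m − min_m H m), and the score f k = (1−α)·Ĵ k + α·Ĥ k. If i, j : Fin K satisfy f j ≥ f i, then J j − J i ≥ (−α/(1−α))·(max_k J k − min_k J k). -/
open Set

/-- On a constant family this is `0 / 0 = 0`. -/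
noncomputable def minMaxNormalize {ι : Type*} (x : ι → ℝ) (k : ι) : ℝ :=
  (x k - ⨅ m, x m) / ((⨆ m, x m) - ⨅ m, x m)

section MinMaxNormalize

variable {ι : Type*} (x : ι → ℝ)

theorem minMaxNormalize_mem_Icc [Finite ι] (k : ι) : minMaxNormalize x k ∈ Icc (0 : ℝ) 1 := by
  have hlo : (⨅ m, x m) ≤ x k := ciInf_le (finite_range x).bddBelow k
  have hhi : x k ≤ ⨆ m, x m := le_ciSup (finite_range x).bddAbove k
  exact ⟨div_nonneg (by linarith) (by linarith), div_le_one_of_le₀ (by linarith) (by linarith)⟩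

theorem minMaxNormalize_sub_mul_range (i j : ι) (hrange : (⨅ m, x m) < ⨆ m, x m) :
    (minMaxNormalize x j - minMaxNormalize x i) * ((⨆ m, x m) - ⨅ m, x m) = x j - x i := by
  have : (⨆ m, x m) - ⨅ m, x m ≠ 0 := (sub_pos.mpr hrange).ne'
  unfold minMaxNormalize
  field_simp
  ring

end MinMaxNormalize

/-- Since `b ∈ [0, 1]`, the term `α * b` can make up for a loss of at most `α` in `(1 - α) * a`. -/
theorem neg_div_one_sub_le_sub_of_score_le {ι : Type*} {a b : ι → ℝ} {α : ℝ}
    (hα0 : 0 ≤ α) (hα1 : α < 1) (hb : ∀ k, b k ∈ Icc (0 : ℝ) 1) {i j : ι}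
    (hscore : (1 - α) * a i + α * b i ≤ (1 - α) * a j + α * b j) :
    -α / (1 - α) ≤ a j - a i := by
  have hb_gain : α * (b j - b i) ≤ α :=
    mul_le_of_le_one_right hα0 (by linarith [(hb j).2, (hb i).1])
  rw [div_le_iff₀ (sub_pos.mpr hα1)]
  linarith

theorem picking_rule_performance_drop_bound_general
    (K : ℕ) (J H : Fin K → ℝ) (α : ℝ)
    (hα0 : 0 ≤ α) (hα1 : α < 1)
    (hJrange : (⨅ m, J m) < ⨆ m, J m)
    (Jhat Hhat f : Fin K → ℝ)
    (hJhat : ∀ k, Jhat k = (J k - ⨅ m, J m) / ((⨆ m, J m) - ⨅ m, J m))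
    (hHhat : ∀ k, Hhat k = (H k - ⨅ m, H m) / ((⨆ m, H m) - ⨅ m, H m))
    (hf : ∀ k, f k = (1 - α) * Jhat k + α * Hhat k)
    (i j : Fin K) (hpick : f j ≥ f i) :
    J j - J i ≥ (-α / (1 - α)) * ((⨆ k, J k) - ⨅ k, J k) := by
  have hJhat' : Jhat = minMaxNormalize J := funext hJhat
  have hHhat' : Hhat = minMaxNormalize H := funext hHhat
  subst hJhat' hHhat'
  have hdrop : -α / (1 - α) ≤ minMaxNormalize J j - minMaxNormalize J i :=
    neg_div_one_sub_le_sub_of_score_le hα0 hα1 (minMaxNormalize_mem_Icc H)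
      (by simpa only [hf] using hpick)
  rw [← minMaxNormalize_sub_mul_range J i j hJrange]
  exact mul_le_mul_of_nonneg_right hdrop (sub_pos.mpr hJrange).le

/-- Penultimate inequality in the proof of Theorem 1: switching from policy
`i` to the policy `j` preferred by the picking rule incurs a performance drop
of at most `(α/(1-α))` times the performance range of the buffer. -/
theorem picking_rule_performance_drop_bound
    (K : ℕ) (hK : 1 ≤ K) (J H : Fin K → ℝ) (α : ℝ)
    (hα0 : 0 ≤ α) (hα1 : α < 1)
    (hJrange : (⨅ m, J m) < ⨆ m, J m)
    (hHrange : (⨅ m, H m) < ⨆ m, H m)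
    (Jhat Hhat f : Fin K → ℝ)
    (hJhat : ∀ k, Jhat k = (J k - ⨅ m, J m) / ((⨆ m, J m) - ⨅ m, J m))
    (hHhat : ∀ k, Hhat k = (H k - ⨅ m, H m) / ((⨆ m, H m) - ⨅ m, H m))
    (hf : ∀ k, f k = (1 - α) * Jhat k + α * Hhat k)
    (i j : Fin K) (hpick : f j ≥ f i) :
    J j - J i ≥ (-α / (1 - α)) * ((⨆ k, J k) - ⨅ k, J k) :=
  picking_rule_performance_drop_bound_general K J H α hα0 hα1 hJrange Jhat Hhat f hJhat hHhat hf i j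
    hpick
end
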